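/- arXiv:2408.10712 — 6 statements merged into one kernel-verified Lean document; each statement's English description precedes it below -/
import Mathlib

section
/- Let {P_n} be the Perrin sequence. Suppose the base-10 digit expansion of P_n is the concatenation of two repdigit blocks, i.e., it consists of ℓ ≥ 1 copies of a digit d1 (the leading digit, so d1 ≥ 1) followed by m ≥ 1 copies of a digit d2 (equivalently, P_n = d1·((10^ℓ − 1)/9)·10^m + d2·((10^m − 1)/9), with 10^{ℓ+m−1} ≤ P_n), and suppose moreover that this digit string is a palindrome (it reads the same forwards and backwards). Then P_n = 22. -/
/-!
Since the first and last digits of a palindrome agree, the two blocks carry the same digit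
`d`, so `P n = d · (10^k − 1)/9` is a repdigit with `k ≥ 2` digits, i.e. `9 P n + d = d · 10^k`.
For `k ≥ 3` this is impossible modulo `12625 = 5^3 · 101`: there `10^k ≡ 0 (mod 125)` and
`10^k` has period `4` modulo `101`, while `P n` has period `600`, so the claim reduces to a
finite check. For `k = 2` we get `P n = 11 d ≤ 99`, so `n ≤ 16`, and among these only `P 11 = 22`
has this form.
-/

def perrin : ℕ → ℕ
  | 0 => 3
  | 1 => 0
  | 2 => 2
  | n + 3 => perrin (n + 1) + perrin n

theorem Nat.mod_eq_div_pow_log_of_digits_reverse {b N : ℕ} (hb : 2 ≤ b)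
    (h : (digits b N).reverse = digits b N) : N % b = N / b ^ log b N := by
  rcases eq_or_ne N 0 with rfl | hN
  · simp
  have hlen : (digits b N).length = log b N + 1 := length_digits b N hb hN
  have hends : (digits b N).getD 0 0 = (digits b N).getD (log b N) 0 := by
    have := congrFun (List.getD_reverse (l := digits b N) 0 (by omega)) 0
    rwa [h, hlen, Nat.add_sub_cancel, Nat.sub_zero] at this
  have hlead : N / b ^ log b N < b := by
    rw [div_lt_iff_lt_mul (by positivity), ← pow_succ']
    exact lt_pow_succ_log_self (by omega) N
  rw [getD_digits _ _ hb, getD_digits _ _ hb, pow_zero, Nat.div_one,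
    mod_eq_of_lt hlead] at hends
  exact hends

def repunit (k : ℕ) : ℕ := (10 ^ k - 1) / 9

theorem nine_mul_repunit_add_one (k : ℕ) : 9 * repunit k + 1 = 10 ^ k := by
  rw [repunit, Nat.mul_div_cancel' (by simpa using Nat.sub_one_dvd_pow_sub_one 10 k)]
  exact Nat.sub_add_cancel (Nat.one_le_pow _ _ (by norm_num))

theorem repunit_add (a b : ℕ) : repunit (a + b) = repunit a * 10 ^ b + repunit b := by
  have ha := nine_mul_repunit_add_one a
  have hb := nine_mul_repunit_add_one b
  have hab := nine_mul_repunit_add_one (a + b)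
  rw [pow_add, ← ha, ← hb] at hab
  nlinarith

section TwoBlocks

variable {ℓ m d₁ d₂ : ℕ}

theorem repdigit_concat_mod_ten (hm : 1 ≤ m) (hd₂ : d₂ ≤ 9) :
    (d₁ * repunit ℓ * 10 ^ m + d₂ * repunit m) % 10 = d₂ := by
  obtain ⟨m, rfl⟩ := Nat.exists_eq_add_of_le' hm
  have hB : repunit (m + 1) % 10 = 1 := by
    have := nine_mul_repunit_add_one (m + 1)
    rw [pow_succ] at this
    omega
  rw [Nat.add_mod, pow_succ, ← mul_assoc, Nat.mul_mod_left, Nat.mul_mod, hB]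
  simp [Nat.mod_eq_of_lt (show d₂ < 10 by omega)]

theorem repdigit_concat_div_ten_pow (hℓ : 1 ≤ ℓ) (hd₁ : d₁ ≤ 9) (hd₂ : d₂ ≤ 9) :
    (d₁ * repunit ℓ * 10 ^ m + d₂ * repunit m) / 10 ^ (ℓ + m - 1) = d₁ := by
  obtain ⟨ℓ, rfl⟩ := Nat.exists_eq_add_of_le' hℓ
  have hA : repunit (ℓ + 1) = 10 ^ ℓ + repunit ℓ := by
    rw [add_comm, repunit_add]
    norm_num [repunit]
  have hC := nine_mul_repunit_add_one ℓ
  have hB := nine_mul_repunit_add_one m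
  rw [show ℓ + 1 + m - 1 = ℓ + m by omega, pow_add, hA]
  apply Nat.div_eq_of_lt_le
  · nlinarith [Nat.zero_le (d₁ * repunit ℓ * 10 ^ m), Nat.zero_le (d₂ * repunit m)]
  · nlinarith [Nat.mul_le_mul_right (repunit ℓ * 10 ^ m) hd₁, Nat.mul_le_mul_right (repunit m) hd₂,
      congrArg (· * 10 ^ m) hC]

end TwoBlocks

theorem perrin_add_three (n : ℕ) : perrin (n + 3) = perrin (n + 1) + perrin n := rfl

theorem le_perrin_of_le_three_consecutive {a c : ℕ} (h₀ : c ≤ perrin a)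
    (h₁ : c ≤ perrin (a + 1)) (h₂ : c ≤ perrin (a + 2)) {n : ℕ} (hn : a ≤ n) :
    c ≤ perrin n := by
  induction n using Nat.strong_induction_on with
  | _ n ih =>
    obtain ⟨k, rfl⟩ := Nat.exists_eq_add_of_le hn
    match k with
    | 0 => exact h₀
    | 1 => exact h₁
    | 2 => exact h₂
    | k + 3 =>
      rw [show a + (k + 3) = a + k + 3 by omega, perrin_add_three]
      exact le_add_right (ih _ (by omega) (by omega))

theorem perrin_periodic_mod {M p : ℕ} (h : ∀ i < 3, perrin (p + i) ≡ perrin i [MOD M]) :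
    Function.Periodic (fun n ↦ perrin n % M) p := by
  intro n
  induction n using Nat.strong_induction_on with
  | _ n ih =>
    match n with
    | 0 => simpa [Nat.ModEq, add_comm] using h 0 (by omega)
    | 1 => simpa [Nat.ModEq, add_comm] using h 1 (by omega)
    | 2 => simpa [Nat.ModEq, add_comm] using h 2 (by omega)
    | k + 3 =>
      change perrin (k + 3 + p) ≡ perrin (k + 3) [MOD M]
      rw [show k + 3 + p = (k + p) + 3 by omega, perrin_add_three, perrin_add_three,
        show k + p + 1 = k + 1 + p by omega]
      exact Nat.ModEq.add (ih (k + 1) (by omega)) (ih k (by omega))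

set_option maxRecDepth 10000 in
theorem perrin_mod_12625_periodic : Function.Periodic (fun n ↦ perrin n % 12625) 600 :=
  perrin_periodic_mod (by decide)

theorem ten_pow_add_three_mod_12625_periodic :
    Function.Periodic (fun k ↦ 10 ^ (k + 3) % 12625) 4 := by
  intro k
  change 10 ^ (k + 4 + 3) ≡ 10 ^ (k + 3) [MOD 12625]
  rw [show k + 4 + 3 = k + 7 by omega, pow_add, pow_add]
  exact Nat.ModEq.mul_left _ (by decide)

set_option maxRecDepth 10000 in
theorem nine_mul_perrin_add_mod_12625_ne :
    ∀ r < 600, ∀ d < 10, ∀ j < 4,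
      (9 * perrin r + d) % 12625 = d * 10 ^ (j + 3) % 12625 → d = 0 := by
  decide

theorem nine_mul_perrin_add_ne_mul_ten_pow {n d k : ℕ} (hd : 1 ≤ d) (hd' : d ≤ 9)
    (hk : 3 ≤ k) : 9 * perrin n + d ≠ d * 10 ^ k := by
  intro h
  obtain ⟨j, rfl⟩ : ∃ j, k = j + 3 := ⟨k - 3, by omega⟩
  have hP : perrin (n % 600) ≡ perrin n [MOD 12625] := perrin_mod_12625_periodic.map_mod_nat n
  have hT : 10 ^ (j % 4 + 3) ≡ 10 ^ (j + 3) [MOD 12625] :=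
    ten_pow_add_three_mod_12625_periodic.map_mod_nat j
  have hmod : 9 * perrin (n % 600) + d ≡ d * 10 ^ (j % 4 + 3) [MOD 12625] :=
    ((hP.mul_left 9).add_right d).trans (h ▸ (hT.mul_left d).symm)
  have := nine_mul_perrin_add_mod_12625_ne (n % 600) (Nat.mod_lt _ (by norm_num)) d (by omega)
    (j % 4) (Nat.mod_lt _ (by norm_num)) hmod
  omega

theorem perrin_eq_22_of_eq_mul_repunit {n d k : ℕ} (hd : 1 ≤ d) (hd' : d ≤ 9) (hk : 2 ≤ k)
    (h : perrin n = d * repunit k) : perrin n = 22 := by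
  have h9 : 9 * perrin n + d = d * 10 ^ k := by rw [h, ← nine_mul_repunit_add_one]; ring
  obtain rfl | hk : k = 2 ∨ 3 ≤ k := by omega
  · have h11 : perrin n = 11 * d := by omega
    have hn : n < 17 := by
      by_contra! hn
      have := le_perrin_of_le_three_consecutive (c := 100) (by decide) (by decide) (by decide) hn
      omega
    interval_cases n <;> simp only [perrin] at h11 ⊢ <;> omega
  · exact absurd h9 (nine_mul_perrin_add_ne_mul_ten_pow hd hd' hk)

/-- If the decimal expansion of the Perrin number `P n` consists of `ℓ ≥ 1` copies of a
digit `d1 ≥ 1` followed by `m ≥ 1` copies of a digit `d2` (expressed arithmetically as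
`P n = d1·((10^ℓ − 1)/9)·10^m + d2·((10^m − 1)/9)` with `10^(ℓ+m−1) ≤ P n`), and moreover
the digit string of `P n` is a palindrome, then `P n = 22`. -/
theorem perrin_palindromic_concat_of_two_repdigits
    (n ℓ m d1 d2 : ℕ) (hℓ : 1 ≤ ℓ) (hm : 1 ≤ m)
    (hd1 : 1 ≤ d1) (hd1' : d1 ≤ 9) (hd2 : d2 ≤ 9)
    (heq : perrin n = d1 * ((10 ^ ℓ - 1) / 9) * 10 ^ m + d2 * ((10 ^ m - 1) / 9))
    (hsize : 10 ^ (ℓ + m - 1) ≤ perrin n)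
    (hpal : (Nat.digits 10 (perrin n)).reverse = Nat.digits 10 (perrin n)) :
    perrin n = 22 := by
  have hN : perrin n = d1 * repunit ℓ * 10 ^ m + d2 * repunit m := heq
  have hlead : perrin n / 10 ^ (ℓ + m - 1) = d1 := hN ▸ repdigit_concat_div_ten_pow hℓ hd1' hd2
  have hlog : Nat.log 10 (perrin n) = ℓ + m - 1 := by
    refine Nat.log_eq_of_pow_le_of_lt_pow hsize ?_
    rw [pow_succ', ← Nat.div_lt_iff_lt_mul (by positivity), hlead]
    omega
  have hd : d2 = d1 := by
    have hends := Nat.mod_eq_div_pow_log_of_digits_reverse (by norm_num) hpal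
    rwa [hlog, hlead, hN, repdigit_concat_mod_ten hm hd2] at hends
  subst hd
  refine perrin_eq_22_of_eq_mul_repunit (k := ℓ + m) hd1 hd1' (by omega) ?_
  rw [hN, repunit_add]
  ring
end

section
/- Let α be the unique real root of X³ − X − 1. Then for every integer n ≥ 0, the n-th Perrin number satisfies |P_n − αⁿ| < 3·α^{−n/2}. -/
/-!
Over `ℂ`, `X³ - X - 1 = (X - α)(X² + αX + α² - 1)`, and the quadratic factor has negative
discriminant `4 - 3α²`, so its roots are a conjugate pair `β, β̄` with `|β|² = α² - 1 = α⁻¹`.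
The power sums `αⁿ + βⁿ + β̄ⁿ` satisfy the Perrin recurrence and start `3, 0, 2`, so they
equal `Pₙ`, hence `|Pₙ - αⁿ| ≤ 2|β|ⁿ = 2α^(-n/2)`.
-/

open ComplexConjugate

theorem perrin_eq_pow_add_pow_add_pow {R : Type*} [CommRing R] {a b c : R}
    (ha : a ^ 3 = a + 1) (hsum : b + c = -a) (hprod : b * c = a ^ 2 - 1) (n : ℕ) :
    (perrin n : R) = a ^ n + b ^ n + c ^ n := by
  have hb : b ^ 3 = b + 1 := by
    linear_combination (b - a) * (b * hsum - hprod) + ha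
  have hc : c ^ 3 = c + 1 := by
    linear_combination (c - a) * (c * hsum - hprod) + ha
  induction n using perrin.induct with
  | case1 => norm_num [perrin]
  | case2 => simp only [perrin, Nat.cast_zero, pow_one]; linear_combination -hsum
  | case3 => simp only [perrin, Nat.cast_ofNat]; linear_combination -(b + c - a) * hsum + 2 * hprod
  | case4 n ih₁ ih₀ =>
    show (perrin (n + 3) : R) = a ^ (n + 3) + b ^ (n + 3) + c ^ (n + 3)
    rw [perrin, Nat.cast_add, ih₁, ih₀]
    linear_combination -(a ^ n * ha + b ^ n * hb + c ^ n * hc)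

theorem Complex.exists_add_conj_eq_mul_conj_eq {s p : ℝ} (h : s ^ 2 ≤ 4 * p) :
    ∃ z : ℂ, z + conj z = s ∧ z * conj z = p := by
  refine ⟨⟨s / 2, √(p - s ^ 2 / 4)⟩, ?_, ?_⟩
  · rw [Complex.add_conj]; push_cast; ring
  · rw [Complex.mul_conj, Complex.normSq_mk, Real.mul_self_sqrt (by linarith)]; push_cast; ring

theorem pow_eq_rpow_neg_div_two {r x : ℝ} (hr : 0 ≤ r) (hx : 0 < x) (h : r ^ 2 = x⁻¹) (n : ℕ) :
    r ^ n = x ^ (-(n : ℝ) / 2) := by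
  rw [neg_div, Real.rpow_neg hx.le, ← Real.inv_rpow hx.le, ← h, ← Real.rpow_natCast,
    ← Real.rpow_natCast, ← Real.rpow_mul hr]
  ring_nf

/-- If `α` is the (unique) real root of `X³ − X − 1`, then `|P n − αⁿ| < 3·α^(−n/2)` for
every `n ≥ 0`. -/
theorem perrin_error_bound (α : ℝ) (hα : α ^ 3 - α - 1 = 0) (n : ℕ) :
    |(perrin n : ℝ) - α ^ n| < 3 * α ^ (-(n : ℝ) / 2) := by
  have hα₁ : 1 < α := by nlinarith [sq_nonneg α, sq_nonneg (α - 1), sq_nonneg (α + 1)]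
  have hdisc : (-α) ^ 2 ≤ 4 * (α ^ 2 - 1) := by nlinarith
  obtain ⟨β, hsum, hprod⟩ := Complex.exists_add_conj_eq_mul_conj_eq hdisc
  have hbinet : (perrin n : ℂ) = α ^ n + β ^ n + conj β ^ n :=
    perrin_eq_pow_add_pow_add_pow (by exact_mod_cast (by linear_combination hα : α ^ 3 = α + 1))
      (by exact_mod_cast hsum) (by exact_mod_cast hprod) n
  have hnorm_sq : ‖β‖ ^ 2 = α⁻¹ := by
    rw [← Complex.normSq_eq_norm_sq]
    have hnormSq : Complex.normSq β = α ^ 2 - 1 := by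
      exact_mod_cast (Complex.mul_conj β).symm.trans hprod
    rw [hnormSq]
    field_simp
    linear_combination hα
  have hnorm := pow_eq_rpow_neg_div_two (norm_nonneg β) (by linarith) hnorm_sq n
  calc |(perrin n : ℝ) - α ^ n| = ‖β ^ n + conj β ^ n‖ := by
        rw [← Real.norm_eq_abs, ← Complex.norm_real]; push_cast; rw [hbinet]; ring_nf
    _ ≤ ‖β‖ ^ n + ‖β‖ ^ n := by
        grw [norm_add_le, norm_pow, norm_pow, Complex.norm_conj]
    _ < 3 * α ^ (-(n : ℝ) / 2) := by
        rw [hnorm]; linarith [Real.rpow_pos_of_pos (by linarith : 0 < α) (-(n : ℝ) / 2)]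
end

section
/- Suppose n ≥ 2, ℓ ≥ 1, m ≥ 1 are integers, d1 ∈ {1,…,9}, d2 ∈ {0,…,9}, and equation (★) holds: 9·P_n = d1·10^{2ℓ+m} − (d1−d2)·10^{ℓ+m} + (d1−d2)·10^ℓ − d1. Then 2ℓ + m − 2 < n. -/
lemma perrin_le (n : ℕ) : perrin n ≤ 3 * 2 ^ n := by
  induction n using Nat.strong_induction_on with
  | _ n ih =>
    match n with
    | 0 => simp [perrin]
    | 1 => simp [perrin]
    | 2 => simp [perrin]
    | k + 3 =>
      have h1 := ih (k + 1) (by omega)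
      have h0 := ih k (by omega)
      have e : perrin (k + 3) = perrin (k + 1) + perrin k := rfl
      have e1 : (2:ℕ) ^ (k + 1) = 2 * 2 ^ k := by ring
      have e3 : (2:ℕ) ^ (k + 3) = 8 * 2 ^ k := by ring
      omega

/-- If `n ≥ 2`, `ℓ, m ≥ 1`, `d1 ∈ {1,…,9}`, `d2 ∈ {0,…,9}` satisfy equation (★):
`9·P n = d1·10^(2ℓ+m) − (d1−d2)·10^(ℓ+m) + (d1−d2)·10^ℓ − d1`, then `2ℓ + m − 2 < n`. -/
theorem two_ell_add_m_lt (n ℓ m : ℕ) (hn : 2 ≤ n) (hℓ : 1 ≤ ℓ) (hm : 1 ≤ m)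
    (d1 d2 : ℤ) (hd1 : 1 ≤ d1) (hd1' : d1 ≤ 9) (hd2 : 0 ≤ d2) (hd2' : d2 ≤ 9)
    (heq : 9 * (perrin n : ℤ) =
      d1 * 10 ^ (2 * ℓ + m) - (d1 - d2) * 10 ^ (ℓ + m) + (d1 - d2) * 10 ^ ℓ - d1) :
    (2 * ℓ + m : ℤ) - 2 < n := by
  by_contra h
  push_neg at h
  have hnk : n ≤ 2 * ℓ + m - 2 := by
    have : (n : ℤ) ≤ (2 * ℓ + m : ℕ) - 2 := by push_cast; push_cast at h; linarith
    omega
  set K := 2 * ℓ + m with hK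
  have hK3 : 3 ≤ K := by omega
  -- lower bound for the RHS: ≥ 10^(K-1) - 9
  have hpowA : (10:ℤ) ^ ℓ ≤ 10 ^ (ℓ + m) := by
    apply pow_le_pow_right₀ (by norm_num); omega
  have hpowApos : (0:ℤ) < 10 ^ (ℓ + m) := by positivity
  have hkey : (d1 - d2) * 10 ^ ℓ - (d1 - d2) * 10 ^ (ℓ + m) ≥ -9 * 10 ^ (ℓ + m) := by
    rcases le_or_gt d2 d1 with hc | hc
    · have h1 : 0 ≤ (d1 - d2) * 10 ^ ℓ := mul_nonneg (by linarith) (by positivity)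
      have h2 : (d1 - d2) * 10 ^ (ℓ + m) ≤ 9 * 10 ^ (ℓ + m) :=
        mul_le_mul_of_nonneg_right (by linarith) hpowApos.le
      linarith
    · have h1 : (d1 - d2) * 10 ^ (ℓ + m) ≤ (d1 - d2) * 10 ^ ℓ :=
        mul_le_mul_of_nonpos_left hpowA (by linarith)
      have h2 : -9 * (10:ℤ) ^ (ℓ + m) ≤ 0 := by nlinarith
      linarith
  have hsplitK : (10:ℤ) ^ K = 10 * 10 ^ (K - 1) := by
    rw [← pow_succ']
    congr 1
    omega
  have hle : (10:ℤ) ^ (ℓ + m) ≤ 10 ^ (K - 1) := by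
    apply pow_le_pow_right₀ (by norm_num); omega
  have hd1pow : d1 * 10 ^ K ≥ 10 ^ K := by nlinarith [pow_pos (show (0:ℤ) < 10 by norm_num) K]
  have hlow : 9 * (perrin n : ℤ) ≥ 10 ^ (K - 1) - 9 := by
    rw [heq]
    have : -9 * (10:ℤ) ^ (ℓ + m) ≥ -9 * 10 ^ (K - 1) := by nlinarith
    nlinarith
  -- upper bound
  have hup : (perrin n : ℤ) ≤ 3 * 2 ^ (K - 2) := by
    have h1 : (perrin n : ℤ) ≤ 3 * 2 ^ n := by exact_mod_cast perrin_le n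
    have h2 : (2:ℤ) ^ n ≤ 2 ^ (K - 2) := by
      apply pow_le_pow_right₀ (by norm_num); omega
    linarith
  -- contradiction: 10^(K-1) - 9 > 27 * 2^(K-2)
  have h10 : (10:ℤ) ^ (K - 1) = 10 * (5 ^ (K - 2) * 2 ^ (K - 2)) := by
    rw [← mul_pow]
    norm_num
    rw [← pow_succ']
    congr 1
    omega
  have h5 : (5:ℤ) ≤ 5 ^ (K - 2) := by
    calc (5:ℤ) = 5 ^ 1 := by norm_num
    _ ≤ 5 ^ (K - 2) := by apply pow_le_pow_right₀ (by norm_num); omega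
  have h2pos : (2:ℤ) ≤ 2 ^ (K - 2) := by
    calc (2:ℤ) = 2 ^ 1 := by norm_num
    _ ≤ 2 ^ (K - 2) := by apply pow_le_pow_right₀ (by norm_num); omega
  nlinarith [mul_le_mul_of_nonneg_right h5 (by positivity : (0:ℤ) ≤ 2 ^ (K - 2))]
end

section
/- Let α be the unique real root of X³ − X − 1. Suppose integers n > 700, ℓ ≥ 1, m ≥ 1 and digits d1 ∈ {1,…,9}, d2 ∈ {0,…,9} satisfy equation (★): 9·P_n = d1·10^{2ℓ+m} − (d1−d2)·10^{ℓ+m} + (d1−d2)·10^ℓ − d1. Then |(9/d1)·αⁿ·10^{−(2ℓ+m)} − 1| < 28·10^{−ℓ}. -/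
/-- The error term `E k = perrin k − α^k` (equal to `β^k + γ^k` for the complex roots). -/
noncomputable def perrE (α : ℝ) (k : ℕ) : ℝ := (perrin k : ℝ) - α ^ k

/-- A Lyapunov quadratic form for the two-term recurrence satisfied by `perrE`. -/
noncomputable def perrW (α : ℝ) (k : ℕ) : ℝ :=
  α * perrE α (k + 1) ^ 2 + α ^ 2 * perrE α k * perrE α (k + 1) + perrE α k ^ 2

lemma perrE_rec3 {α : ℝ} (hα : α ^ 3 - α - 1 = 0) (k : ℕ) :
    perrE α (k + 3) = perrE α (k + 1) + perrE α k := by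
  simp only [perrE, perrin]
  push_cast
  linear_combination (-(α ^ k)) * hα

lemma perrE_rec2 {α : ℝ} (hα : α ^ 3 - α - 1 = 0) (k : ℕ) :
    α * perrE α (k + 2) + α ^ 2 * perrE α (k + 1) + perrE α k = 0 := by
  induction k using Nat.strong_induction_on with
  | _ k ih =>
    match k with
    | 0 =>
      simp only [perrE, perrin]
      push_cast
      linear_combination (-2 : ℝ) * hα
    | 1 =>
      simp only [perrE]
      norm_num [perrin]
      linear_combination (-2 * α) * hα
    | 2 =>
      simp only [perrE]
      norm_num [perrin]
      linear_combination (-2 * (α ^ 2 + 1)) * hα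
    | (j + 3) =>
      have h1 := ih j (by omega)
      have h2 := ih (j + 1) (by omega)
      have e1 : perrE α (j + 5) = perrE α (j + 3) + perrE α (j + 2) := perrE_rec3 hα (j + 2)
      have e2 : perrE α (j + 4) = perrE α (j + 2) + perrE α (j + 1) := perrE_rec3 hα (j + 1)
      have e3 : perrE α (j + 3) = perrE α (j + 1) + perrE α j := perrE_rec3 hα j
      show α * perrE α (j + 5) + α ^ 2 * perrE α (j + 4) + perrE α (j + 3) = 0
      linear_combination α * e1 + α ^ 2 * e2 + e3 + h1 + h2

lemma alpha_gt1 {α : ℝ} (hα : α ^ 3 - α - 1 = 0) : 1 < α := by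
  by_contra h
  push_neg at h
  have key : (α - 1) * (α ^ 2 + α + 1) = α := by linear_combination hα
  have hpos : 0 < α ^ 2 + α + 1 := by nlinarith [sq_nonneg (2 * α + 1)]
  have hn : α ≤ 0 := by nlinarith
  have h3 : α ^ 3 ≤ 0 := by nlinarith [mul_nonneg (neg_nonneg.2 hn) (sq_nonneg α)]
  have h4 : α ≤ -1 := by linarith
  nlinarith [mul_nonneg (by linarith : (0:ℝ) ≤ -α) (by nlinarith : (0:ℝ) ≤ α ^ 2 - 1)]

lemma alpha_lt2 {α : ℝ} (hα : α ^ 3 - α - 1 = 0) : α < 2 := by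
  nlinarith [sq_nonneg (α + 1)]

lemma perrW_nonneg {α : ℝ} (hα : α ^ 3 - α - 1 = 0) (k : ℕ) : 0 ≤ perrW α k := by
  have h1 : 1 < α := alpha_gt1 hα
  have h2 : α < 2 := alpha_lt2 hα
  unfold perrW
  nlinarith [mul_nonneg (by linarith : (0:ℝ) ≤ α)
      (sq_nonneg (2 * perrE α (k + 1) + α * perrE α k)),
    mul_nonneg (by linarith : (0:ℝ) ≤ 3 - α) (sq_nonneg (perrE α k))]

lemma perrW_step {α : ℝ} (hα : α ^ 3 - α - 1 = 0) (k : ℕ) :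
    α * perrW α (k + 1) = perrW α k := by
  have g := perrE_rec2 hα k
  unfold perrW
  linear_combination (α * perrE α (k + 2) - perrE α k) * g

lemma perrW_le {α : ℝ} (hα : α ^ 3 - α - 1 = 0) (k : ℕ) : perrW α k ≤ perrW α 0 := by
  induction k with
  | zero => exact le_refl _
  | succ j ih =>
    have h1 : 1 < α := alpha_gt1 hα
    have hs := perrW_step hα j
    have hn := perrW_nonneg hα (j + 1)
    nlinarith

/-- The error term has square at most 4, i.e. `|perrin k − α^k| ≤ 2`. -/
lemma perrE_sq_le {α : ℝ} (hα : α ^ 3 - α - 1 = 0) (k : ℕ) : perrE α k ^ 2 ≤ 4 := by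
  have h1 : 1 < α := alpha_gt1 hα
  have h2 : α < 2 := alpha_lt2 hα
  have hW := perrW_le hα k
  have hW0 : perrW α 0 = 3 - α := by
    unfold perrW perrE
    norm_num [perrin]
    linear_combination -hα
  rw [hW0] at hW
  unfold perrW at hW
  nlinarith [mul_nonneg (by linarith : (0:ℝ) ≤ α)
      (sq_nonneg (2 * perrE α (k + 1) + α * perrE α k)),
    sq_nonneg (perrE α k)]

/-- Let `α` be the (unique) real root of `X³ − X − 1`. If `n > 700`, `ℓ, m ≥ 1`,
`d1 ∈ {1,…,9}`, `d2 ∈ {0,…,9}` satisfy equation (★):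
`9·P n = d1·10^(2ℓ+m) − (d1−d2)·10^(ℓ+m) + (d1−d2)·10^ℓ − d1`, then
`|(9/d1)·αⁿ·10^(−(2ℓ+m)) − 1| < 28·10^(−ℓ)`. -/
theorem first_linear_form_bound (α : ℝ) (hα : α ^ 3 - α - 1 = 0)
    (n ℓ m : ℕ) (hn : 700 < n) (hℓ : 1 ≤ ℓ) (hm : 1 ≤ m)
    (d1 d2 : ℤ) (hd1 : 1 ≤ d1) (hd1' : d1 ≤ 9) (hd2 : 0 ≤ d2) (hd2' : d2 ≤ 9)
    (heq : 9 * (perrin n : ℤ) =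
      d1 * 10 ^ (2 * ℓ + m) - (d1 - d2) * 10 ^ (ℓ + m) + (d1 - d2) * 10 ^ ℓ - d1) :
    |(9 / (d1 : ℝ)) * α ^ n * (10 : ℝ) ^ (-(2 * ℓ + m : ℤ)) - 1|
      < 28 * (10 : ℝ) ^ (-(ℓ : ℤ)) := by
  set L : ℝ := (10 : ℝ) ^ ℓ with hLdef
  set M : ℝ := (10 : ℝ) ^ (ℓ + m) with hMdef
  set T : ℝ := (10 : ℝ) ^ (2 * ℓ + m) with hTdef
  have hT : T = L * M := by
    rw [hTdef, hLdef, hMdef, ← pow_add]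
    ring_nf
  have hLpos : (0:ℝ) < L := by positivity
  have hMpos : (0:ℝ) < M := by positivity
  have hTpos : (0:ℝ) < T := by positivity
  have hL10 : (10:ℝ) ≤ L := by
    calc (10:ℝ) = 10 ^ 1 := (pow_one 10).symm
    _ ≤ 10 ^ ℓ := pow_le_pow_right₀ (by norm_num) hℓ
  have hML : 10 * L ≤ M := by
    rw [hMdef, pow_add]
    have h10m : (10:ℝ) ≤ 10 ^ m := by
      calc (10:ℝ) = 10 ^ 1 := (pow_one 10).symm
      _ ≤ 10 ^ m := pow_le_pow_right₀ (by norm_num) hm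
    nlinarith
  have hM100 : (100:ℝ) ≤ M := by nlinarith
  -- cast hypothesis to ℝ
  have hR : (9:ℝ) * (perrin n : ℝ) =
      (d1:ℝ) * T - ((d1:ℝ) - (d2:ℝ)) * M + ((d1:ℝ) - (d2:ℝ)) * L - (d1:ℝ) := by
    have := congrArg (fun z : ℤ => (z : ℝ)) heq
    push_cast at this
    rw [hTdef, hMdef, hLdef]
    exact_mod_cast this
  have hd1R : (1:ℝ) ≤ (d1:ℝ) := by exact_mod_cast hd1
  have hd1R' : ((d1:ℝ)) ≤ 9 := by exact_mod_cast hd1'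
  have hd2R : (0:ℝ) ≤ (d2:ℝ) := by exact_mod_cast hd2
  have hd2R' : ((d2:ℝ)) ≤ 9 := by exact_mod_cast hd2'
  have hd1pos : (0:ℝ) < (d1:ℝ) := by linarith
  -- error bound
  have hEsq := perrE_sq_le hα n
  have hEub : perrE α n ≤ 2 := by nlinarith [sq_nonneg (perrE α n - 2)]
  have hElb : -2 ≤ perrE α n := by nlinarith [sq_nonneg (perrE α n + 2)]
  have hαn : α ^ n = (perrin n : ℝ) - perrE α n := by unfold perrE; ring
  -- product hints
  have p1 : ((d1:ℝ) - d2) * M ≤ 9 * M :=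
    mul_le_mul_of_nonneg_right (by linarith) hMpos.le
  have p2 : -(9 * M) ≤ ((d1:ℝ) - d2) * M := by
    have := mul_le_mul_of_nonneg_right (show (-9:ℝ) ≤ (d1:ℝ) - d2 by linarith) hMpos.le
    linarith
  have p3 : ((d1:ℝ) - d2) * L ≤ 9 * L :=
    mul_le_mul_of_nonneg_right (by linarith) hLpos.le
  have p4 : -(9 * L) ≤ ((d1:ℝ) - d2) * L := by
    have := mul_le_mul_of_nonneg_right (show (-9:ℝ) ≤ (d1:ℝ) - d2 by linarith) hLpos.le
    linarith
  have p5 : M ≤ (d1:ℝ) * M := le_mul_of_one_le_left hMpos.le hd1R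
  have key : |9 * α ^ n - (d1:ℝ) * T| < 28 * (d1:ℝ) * M := by
    rw [abs_lt]
    constructor
    · rw [hαn]; linarith
    · rw [hαn]; linarith
  -- rewrite the zpow expressions
  have hz1 : (10 : ℝ) ^ (-(2 * ℓ + m : ℤ)) = T⁻¹ := by
    have hc : ((2 * ℓ + m : ℕ) : ℤ) = 2 * (ℓ:ℤ) + (m:ℤ) := by push_cast; ring
    rw [zpow_neg, ← hc, zpow_natCast, hTdef]
  have hz2 : (10 : ℝ) ^ (-(ℓ : ℤ)) = L⁻¹ := by
    rw [zpow_neg, zpow_natCast, hLdef]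
  rw [hz1, hz2]
  have hrw : (9 / (d1:ℝ)) * α ^ n * T⁻¹ - 1 = (9 * α ^ n - (d1:ℝ) * T) / ((d1:ℝ) * T) := by
    field_simp
  rw [hrw, abs_div, abs_of_pos (mul_pos hd1pos hTpos), div_lt_iff₀ (mul_pos hd1pos hTpos)]
  have hRHS : 28 * L⁻¹ * ((d1:ℝ) * T) = 28 * (d1:ℝ) * M := by
    rw [hT]
    field_simp
  rw [hRHS]
  exact key
end

section
/- Let α be the unique real root of X³ − X − 1. Suppose integers n > 700, ℓ ≥ 1, m ≥ 1 and digits d1 ∈ {1,…,9}, d2 ∈ {0,…,9} satisfy equation (★): 9·P_n = d1·10^{2ℓ+m} − (d1−d2)·10^{ℓ+m} + (d1−d2)·10^ℓ − d1. Then |(9/(d1·10^ℓ − (d1 − d2)))·αⁿ·10^{−(ℓ+m)} − 1| < 19·10^{−m}. -/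
set_option maxHeartbeats 1000000 in
/-- Let `α` be the (unique) real root of `X³ − X − 1`. If `n > 700`, `ℓ, m ≥ 1`,
`d1 ∈ {1,…,9}`, `d2 ∈ {0,…,9}` satisfy equation (★):
`9·P n = d1·10^(2ℓ+m) − (d1−d2)·10^(ℓ+m) + (d1−d2)·10^ℓ − d1`, then
`|(9/(d1·10^ℓ − (d1 − d2)))·αⁿ·10^(−(ℓ+m)) − 1| < 19·10^(−m)`. -/
theorem second_linear_form_bound (α : ℝ) (hα : α ^ 3 - α - 1 = 0)
    (n ℓ m : ℕ) (hn : 700 < n) (hℓ : 1 ≤ ℓ) (hm : 1 ≤ m)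
    (d1 d2 : ℤ) (hd1 : 1 ≤ d1) (hd1' : d1 ≤ 9) (hd2 : 0 ≤ d2) (hd2' : d2 ≤ 9)
    (heq : 9 * (perrin n : ℤ) =
      d1 * 10 ^ (2 * ℓ + m) - (d1 - d2) * 10 ^ (ℓ + m) + (d1 - d2) * 10 ^ ℓ - d1) :
    |(9 / ((d1 : ℝ) * 10 ^ ℓ - ((d1 : ℝ) - (d2 : ℝ)))) * α ^ n * (10 : ℝ) ^ (-(ℓ + m : ℤ)) - 1|
      < 19 * (10 : ℝ) ^ (-(m : ℤ)) := by
  have h13 : (1.32:ℝ) < α := by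
    nlinarith [sq_nonneg (α - 1.32), sq_nonneg (α + 1), sq_nonneg α, sq_nonneg (α + 1.32),
      sq_nonneg (α - 1)]
  have h14 : α < 1.33 := by
    nlinarith [sq_nonneg (α - 1.33), sq_nonneg (α + 1), sq_nonneg α, sq_nonneg (α + 1.33)]
  have hαpos : (0:ℝ) < α := by linarith
  -- the error sequence
  set e : ℕ → ℝ := fun k => (perrin k : ℝ) - α ^ k with he
  have he0 : e 0 = 2 := by simp [he]; norm_num [perrin]
  have he1 : e 1 = -α := by simp [he]; norm_num [perrin]
  have he2 : e 2 = 2 - α ^ 2 := by simp [he]; norm_num [perrin]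
  have hrec3 : ∀ k, e (k + 3) = e (k + 1) + e k := by
    intro k
    simp only [he]
    have : perrin (k + 3) = perrin (k + 1) + perrin k := rfl
    rw [this]
    push_cast
    linear_combination (-(α ^ k)) * hα
  have hrec2 : ∀ k, α * e (k + 2) = -(α ^ 2) * e (k + 1) - e k := by
    intro k
    induction k with
    | zero =>
      rw [he2, he1, he0]
      linear_combination -2 * hα
    | succ k ih =>
      rw [hrec3 k]
      linear_combination α * ih - e (k + 1) * hα
  set Q : ℕ → ℝ := fun k => α * (e (k + 1)) ^ 2 + α ^ 2 * e k * e (k + 1) + (e k) ^ 2 with hQdef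
  have hQstep : ∀ k, α * Q (k + 1) = Q k := by
    intro k
    simp only [hQdef]
    linear_combination (α * e (k + 2) - e k) * hrec2 k
  have hQn : ∀ k, α ^ k * Q k = Q 0 := by
    intro k
    induction k with
    | zero => simp
    | succ k ih =>
      calc α ^ (k + 1) * Q (k + 1) = α ^ k * (α * Q (k + 1)) := by ring
        _ = α ^ k * Q k := by rw [hQstep]
        _ = Q 0 := ih
  have hQ0 : Q 0 = 3 - α := by
    simp only [hQdef, he0, he1]
    linear_combination -hα
  have hQlb : ∀ k, (3 - α) * (e k) ^ 2 ≤ 4 * Q k := by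
    intro k
    simp only [hQdef]
    nlinarith [sq_nonneg (2 * e (k + 1) + α * e k), hαpos, sq_nonneg (e k)]
  -- α^n is big
  have hα11 : (16:ℝ) < α ^ 11 := by
    calc (16:ℝ) < 1.32 ^ 11 := by norm_num
      _ < α ^ 11 := by
        exact pow_lt_pow_left₀ h13 (by norm_num) (by norm_num)
  have hαn : (16:ℝ) ≤ α ^ n := by
    calc (16:ℝ) ≤ α ^ 11 := le_of_lt hα11
      _ ≤ α ^ n := pow_le_pow_right₀ (by linarith) (by omega)
  have hαnpos : (0:ℝ) < α ^ n := by positivity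
  -- |e n| ≤ 1/2
  have hQn' : Q n = (3 - α) / α ^ n := by
    have := hQn n
    rw [hQ0] at this
    field_simp
    linarith [this]
  have hen2 : (e n) ^ 2 ≤ 1 / 4 := by
    have h1 := hQlb n
    rw [hQn'] at h1
    have h3α : (0:ℝ) < 3 - α := by linarith
    rw [div_eq_mul_inv] at h1
    have h2 : (3 - α) * (e n) ^ 2 ≤ 4 * ((3 - α) * (α ^ n)⁻¹) := h1
    have h4 : (α ^ n)⁻¹ ≤ 1 / 16 := by
      rw [inv_le_comm₀ (by positivity) (by norm_num)]
      simpa using hαn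
    nlinarith [sq_nonneg (e n)]
  have hen : |e n| ≤ 1 / 2 := by
    rw [abs_le]
    constructor <;> nlinarith [sq_nonneg (e n)]
  -- set up the main quantities
  set X : ℝ := (10:ℝ) ^ ℓ with hXdef
  set Y : ℝ := (10:ℝ) ^ m with hYdef
  have hX : (10:ℝ) ≤ X := by
    calc (10:ℝ) = 10 ^ 1 := by norm_num
      _ ≤ X := pow_le_pow_right₀ (by norm_num) hℓ
  have hY : (10:ℝ) ≤ Y := by
    calc (10:ℝ) = 10 ^ 1 := by norm_num
      _ ≤ Y := pow_le_pow_right₀ (by norm_num) hm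
  have hXpos : (0:ℝ) < X := by positivity
  have hYpos : (0:ℝ) < Y := by positivity
  set A : ℝ := (d1:ℝ) * X - ((d1:ℝ) - (d2:ℝ)) with hAdef
  set B : ℝ := ((d1:ℝ) - (d2:ℝ)) * X - (d1:ℝ) with hBdef
  have hd1R : (1:ℝ) ≤ (d1:ℝ) := by exact_mod_cast hd1
  have hd1R' : (d1:ℝ) ≤ 9 := by exact_mod_cast hd1'
  have hd2R : (0:ℝ) ≤ (d2:ℝ) := by exact_mod_cast hd2
  have hd2R' : (d2:ℝ) ≤ 9 := by exact_mod_cast hd2'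
  have hA : (9:ℝ) ≤ A := by
    have : (d1:ℝ) * (X - 1) ≥ 1 * (X - 1) := by
      apply mul_le_mul_of_nonneg_right hd1R (by linarith)
    simp only [hAdef]
    nlinarith [this, hX]
  have hApos : (0:ℝ) < A := by linarith
  -- the equation over ℝ
  have heqR : 9 * ((perrin n : ℝ)) = A * (X * Y) + B := by
    have h := congrArg (fun z : ℤ => (z : ℝ)) heq
    push_cast at h
    rw [show 2 * ℓ + m = ℓ + (ℓ + m) from by ring, pow_add, pow_add] at h
    simp only [hAdef, hBdef, hXdef, hYdef]
    linear_combination h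
  have h9 : 9 * α ^ n = A * (X * Y) + B - 9 * e n := by
    have : α ^ n = (perrin n : ℝ) - e n := by simp [he]
    rw [this]
    linarith [heqR]
  -- rewrite the goal
  have hzpow1 : (10 : ℝ) ^ (-(ℓ + m : ℤ)) = (X * Y)⁻¹ := by
    rw [show (-(ℓ + m : ℤ)) = -(((ℓ + m : ℕ)) : ℤ) from by push_cast; ring,
      zpow_neg, zpow_natCast, pow_add]
  have hzpow2 : (10 : ℝ) ^ (-(m : ℤ)) = Y⁻¹ := by
    rw [zpow_neg, zpow_natCast]
  rw [hzpow1, hzpow2]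
  have key : 9 / A * α ^ n * (X * Y)⁻¹ - 1 = (B - 9 * e n) / (A * (X * Y)) := by
    field_simp
    linarith [h9]
  rw [key, abs_div, abs_of_pos (by positivity : (0:ℝ) < A * (X * Y)),
    div_lt_iff₀ (by positivity : (0:ℝ) < A * (X * Y))]
  have hBabs : |B - 9 * e n| ≤ 9 * X + 9 + 9 / 2 := by
    have h1 := abs_le.mp hen
    rw [abs_le]
    constructor <;> simp only [hBdef] <;> nlinarith
  calc |B - 9 * e n| ≤ 9 * X + 9 + 9 / 2 := hBabs
    _ < 19 * Y⁻¹ * (A * (X * Y)) := by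
      have : 19 * Y⁻¹ * (A * (X * Y)) = 19 * A * X := by
        field_simp
      rw [this]
      nlinarith
end

section
/- Let α be the unique real root of X³ − X − 1. Suppose integers n > 700, ℓ ≥ 1, m ≥ 1 and digits d1 ∈ {1,…,9}, d2 ∈ {0,…,9} satisfy equation (★): 9·P_n = d1·10^{2ℓ+m} − (d1−d2)·10^{ℓ+m} + (d1−d2)·10^ℓ − d1. Then |((d1·10^{ℓ+m} − (d1 − d2)·10^m + (d1 − d2))/9)·α^{−n}·10^ℓ − 1| < (10/9)·α^{−n}. -/
/-- Error term `P n − α^n`. -/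
noncomputable def perE (α : ℝ) (n : ℕ) : ℝ := (perrin n : ℝ) - α ^ n

lemma perE_rec3 (α : ℝ) (hα3 : α ^ 3 = α + 1) (n : ℕ) :
    perE α (n + 3) = perE α (n + 1) + perE α n := by
  show ((perrin (n+1) + perrin n : ℕ) : ℝ) - α ^ (n+3) = _
  unfold perE
  push_cast
  linear_combination (-(α ^ n)) * hα3

lemma perE_rec2 (α : ℝ) (hα3 : α ^ 3 = α + 1) :
    ∀ n, α * perE α (n + 2) + α ^ 2 * perE α (n + 1) + perE α n = 0 := by
  intro n
  induction n with
  | zero =>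
    simp only [perE, perrin]
    push_cast
    linear_combination (-2 : ℝ) * hα3
  | succ k ih =>
    have h3 := perE_rec3 α hα3 k
    show α * perE α (k + 3) + α ^ 2 * perE α (k + 2) + perE α (k + 1) = 0
    rw [h3]
    linear_combination α * ih - perE α (k + 1) * hα3

lemma perE_quad (α : ℝ) (hα3 : α ^ 3 = α + 1) :
    ∀ n, α ^ n * (α * (perE α (n+1))^2 + α^2 * perE α n * perE α (n+1) + (perE α n)^2)
      = 3 - α := by
  intro n
  induction n with
  | zero =>
    simp only [perE, perrin, pow_zero]
    push_cast
    linear_combination -hα3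
  | succ k ih =>
    have hrel := perE_rec2 α hα3 k
    linear_combination ih + α ^ k * (α * perE α (k + 2) - perE α k) * hrel

lemma perE_sq_le (α : ℝ) (hα3 : α ^ 3 = α + 1) (h1 : 1 < α) (h3 : α < 3) (n : ℕ) :
    (perE α n) ^ 2 ≤ 4 / α ^ n := by
  have hq := perE_quad α hα3 n
  have hx : (0 : ℝ) < α ^ n := pow_pos (by linarith) n
  have hsq : 0 ≤ α * (2 * perE α (n+1) + α * perE α n) ^ 2 := by positivity
  rw [le_div_iff₀ hx]
  nlinarith [hq, hsq, hx, mul_pos hx hx]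

/-- Let `α` be the (unique) real root of `X³ − X − 1`. If `n > 700`, `ℓ, m ≥ 1`,
`d1 ∈ {1,…,9}`, `d2 ∈ {0,…,9}` satisfy equation (★):
`9·P n = d1·10^(2ℓ+m) − (d1−d2)·10^(ℓ+m) + (d1−d2)·10^ℓ − d1`, then
`|((d1·10^(ℓ+m) − (d1 − d2)·10^m + (d1 − d2))/9)·α^(−n)·10^ℓ − 1| < (10/9)·α^(−n)`. -/
theorem third_linear_form_bound (α : ℝ) (hα : α ^ 3 - α - 1 = 0)
    (n ℓ m : ℕ) (hn : 700 < n) (hℓ : 1 ≤ ℓ) (hm : 1 ≤ m)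
    (d1 d2 : ℤ) (hd1 : 1 ≤ d1) (hd1' : d1 ≤ 9) (hd2 : 0 ≤ d2) (hd2' : d2 ≤ 9)
    (heq : 9 * (perrin n : ℤ) =
      d1 * 10 ^ (2 * ℓ + m) - (d1 - d2) * 10 ^ (ℓ + m) + (d1 - d2) * 10 ^ ℓ - d1) :
    |(((d1 : ℝ) * 10 ^ (ℓ + m) - ((d1 : ℝ) - (d2 : ℝ)) * 10 ^ m + ((d1 : ℝ) - (d2 : ℝ))) / 9)
        * α ^ (-(n : ℤ)) * 10 ^ ℓ - 1|
      < (10 / 9) * α ^ (-(n : ℤ)) := by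
  have hα3 : α ^ 3 = α + 1 := by linarith
  have h1 : 1 < α := by nlinarith [sq_nonneg (α - 1), sq_nonneg (α + 1), sq_nonneg α]
  have h3 : α < 3 := by nlinarith [sq_nonneg (α - 1), sq_nonneg (α + 1)]
  have hx : (0 : ℝ) < α ^ n := pow_pos (by linarith) n
  -- α ^ n is large
  have hbig : (324 : ℝ) < α ^ n := by
    have h2 : (2 : ℝ) ≤ α ^ 3 := by linarith
    have ha : (2 : ℝ) ^ 233 ≤ α ^ 699 := by
      calc (2 : ℝ) ^ 233 ≤ (α ^ 3) ^ 233 := pow_le_pow_left₀ (by norm_num) h2 233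
        _ = α ^ 699 := by rw [← pow_mul]
    have hb : α ^ 699 ≤ α ^ n := pow_le_pow_right₀ (le_of_lt h1) (by omega)
    have : (324 : ℝ) < 2 ^ 233 := by norm_num
    linarith
  -- |perE α n| < 1/9
  have hE2 : (perE α n) ^ 2 ≤ 4 / α ^ n := perE_sq_le α hα3 h1 h3 n
  have hE2' : (perE α n) ^ 2 < 1 / 81 := by
    have : 4 / α ^ n < 1 / 81 := by
      rw [div_lt_div_iff₀ hx (by norm_num)]
      linarith
    linarith
  have hElt : -(1/9) < perE α n ∧ perE α n < 1/9 := by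
    constructor <;> nlinarith [sq_nonneg (perE α n - 1/9), sq_nonneg (perE α n + 1/9)]
  -- cast equation to ℝ
  have heqR : 9 * (perrin n : ℝ) =
      (d1 : ℝ) * 10 ^ (2 * ℓ + m) - ((d1 : ℝ) - d2) * 10 ^ (ℓ + m)
        + ((d1 : ℝ) - d2) * 10 ^ ℓ - d1 := by exact_mod_cast heq
  have hxne : (α : ℝ) ^ n ≠ 0 := ne_of_gt hx
  rw [zpow_neg, zpow_natCast]
  have goal_eq :
      (((d1 : ℝ) * 10 ^ (ℓ + m) - ((d1 : ℝ) - (d2 : ℝ)) * 10 ^ m + ((d1 : ℝ) - (d2 : ℝ))) / 9)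
        * (α ^ n)⁻¹ * 10 ^ ℓ - 1
      = ((perrin n : ℝ) - α ^ n + (d1 : ℝ) / 9) * (α ^ n)⁻¹ := by
    field_simp
    ring_nf
    ring_nf at heqR
    linarith [heqR]
  rw [goal_eq, abs_mul, abs_inv, abs_of_pos hx]
  have habs : |(perrin n : ℝ) - α ^ n + (d1 : ℝ) / 9| < 10 / 9 := by
    have hd1R : (1 : ℝ) ≤ (d1 : ℝ) := by exact_mod_cast hd1
    have hd1R' : (d1 : ℝ) ≤ 9 := by exact_mod_cast hd1'
    have hperE : perE α n = (perrin n : ℝ) - α ^ n := rfl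
    rw [abs_lt]
    constructor <;> [linarith [hElt.1, hperE ▸ hElt.1]; linarith [hperE ▸ hElt.2]]
  exact mul_lt_mul_of_pos_right habs (inv_pos.mpr hx)
end
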